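/- Let M be a symmetric positive definite n×n real matrix and let A be an m×n real matrix with full row rank m (equivalently, Aᵀ has trivial kernel). Then the (n+m)×(n+m) block matrix [[M, −Aᵀ], [−A, 0]] is invertible. -/
import Mathlib


open Matrix

/-- If `M` is symmetric positive definite and `A` has full row rank (`Aᵀ` has trivial
kernel), then the KKT block matrix `[[M, −Aᵀ], [−A, 0]]` is invertible. -/
theorem kkt_block_matrix_invertible {n m : ℕ}
    (M : Matrix (Fin n) (Fin n) ℝ) (A : Matrix (Fin m) (Fin n) ℝ)
    (hMsymm : M.IsSymm) (hMpd : ∀ v : Fin n → ℝ, v ≠ 0 → 0 < v ⬝ᵥ (M *ᵥ v))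
    (hfullrank : ∀ y : Fin m → ℝ, Aᵀ *ᵥ y = 0 → y = 0) :
    IsUnit (Matrix.fromBlocks M (-Aᵀ) (-A) (0 : Matrix (Fin m) (Fin m) ℝ)) := by
  rw [Matrix.isUnit_iff_isUnit_det, isUnit_iff_ne_zero]
  intro hdet
  obtain ⟨w, hw, hmv⟩ := (Matrix.exists_mulVec_eq_zero_iff).2 hdet
  set x : Fin n → ℝ := w ∘ Sum.inl with hx
  set y : Fin m → ℝ := w ∘ Sum.inr with hy
  have hwe : w = Sum.elim x y := by ext (i | i) <;> rfl
  rw [hwe, Matrix.fromBlocks_mulVec] at hmv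
  have h1 : M *ᵥ x = Aᵀ *ᵥ y := by
    have := congrFun hmv
    funext i
    have hi := this (Sum.inl i)
    simp [Matrix.neg_mulVec] at hi
    linarith [hi]
  have h2 : A *ᵥ x = 0 := by
    funext i
    have hi := congrFun hmv (Sum.inr i)
    simp [Matrix.neg_mulVec] at hi
    simpa using hi
  have hquad : x ⬝ᵥ (M *ᵥ x) = 0 := by
    rw [h1, Matrix.dotProduct_mulVec, Matrix.vecMul_transpose, h2, zero_dotProduct]
  have hx0 : x = 0 := by
    by_contra hxne
    exact absurd hquad (ne_of_gt (hMpd x hxne))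
  have hy0 : y = 0 := by
    apply hfullrank
    rw [← h1, hx0, Matrix.mulVec_zero]
  apply hw
  rw [hwe, hx0, hy0]
  ext (i | i) <;> simp
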